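/- Let f : ℝⁿ → ℝ be twice continuously differentiable and non-convex of grade τ on ℝⁿ, let A : ℝᵐ → ℝⁿ be a linear map, let b ∈ ℝⁿ, and assume m + τ ≥ n. Then the function g : ℝᵐ → ℝ defined by g(x) := f(Ax + b) is non-convex of grade m − n + τ on ℝᵐ. -/

import Mathlib

/-! The Hessian of `g` at `x` is the Hessian of `f` at `A x + b` composed with `A`, so it is
positive semidefinite on the preimage `A⁻¹(V)` of any subspace `V` on which the Hessian of `f` is.
Since `A` induces an injection `ℝᵐ ⧸ A⁻¹(V) → ℝⁿ ⧸ V`, the codimension of `A⁻¹(V)` is at most that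
of `V`, whence `dim A⁻¹(V) ≥ m - (n - τ)`. -/

open scoped RealInnerProductSpace
open Real Set

/-- `f` is non-convex of grade `τ` on `Q`. -/
def NonconvexOfGrade {n : ℕ} (f : EuclideanSpace ℝ (Fin n) → ℝ)
    (Q : Set (EuclideanSpace ℝ (Fin n))) (τ : ℕ) : Prop :=
  ∀ x ∈ Q, ∃ V : Submodule ℝ (EuclideanSpace ℝ (Fin n)),
    τ ≤ Module.finrank ℝ V ∧ ∀ h ∈ V, 0 ≤ iteratedFDeriv ℝ 2 f x ![h, h]

theorem Submodule.finrank_add_finrank_le_finrank_comap_add {K V W : Type*} [DivisionRing K]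
    [AddCommGroup V] [Module K V] [AddCommGroup W] [Module K W]
    [FiniteDimensional K V] [FiniteDimensional K W] (f : V →ₗ[K] W) (p : Submodule K W) :
    Module.finrank K V + Module.finrank K p ≤
      Module.finrank K (p.comap f) + Module.finrank K W := by
  have hinj : Function.Injective ((p.comap f).mapQ p f le_rfl) := by
    rw [← LinearMap.ker_eq_bot]
    exact Submodule.ker_liftQ_eq_bot _ _ _ (by rw [LinearMap.ker_comp, Submodule.ker_mkQ])
  have := LinearMap.finrank_le_finrank_of_injective hinj
  have := (p.comap f).finrank_quotient_add_finrank
  have := p.finrank_quotient_add_finrank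
  omega

theorem iteratedFDeriv_comp_affine_apply {𝕜 E F G : Type*} [NontriviallyNormedField 𝕜]
    [NormedAddCommGroup E] [NormedSpace 𝕜 E] [NormedAddCommGroup F] [NormedSpace 𝕜 F]
    [NormedAddCommGroup G] [NormedSpace 𝕜 G] {N : WithTop ℕ∞} {f : E → F}
    (hf : ContDiff 𝕜 N f) (A : G →L[𝕜] E) (b : E) {k : ℕ} (hk : k ≤ N) (x : G)
    (v : Fin k → G) :
    iteratedFDeriv 𝕜 k (fun x => f (A x + b)) x v = iteratedFDeriv 𝕜 k f (A x + b) (A ∘ v) := by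
  have hfb : ContDiff 𝕜 N (fun z => f (z + b)) := hf.comp (contDiff_id.add contDiff_const)
  rw [show (fun x => f (A x + b)) = (fun z => f (z + b)) ∘ A from rfl,
    A.iteratedFDeriv_comp_right hfb x hk, iteratedFDeriv_comp_add_right]
  rfl

theorem affine_nonconvexOfGrade {n m : ℕ}
    (f : EuclideanSpace ℝ (Fin n) → ℝ) (hf : ContDiff ℝ 2 f)
    (τ : ℕ)
    (hfg : NonconvexOfGrade f (Set.univ) τ)
    (A : EuclideanSpace ℝ (Fin m) →L[ℝ] EuclideanSpace ℝ (Fin n))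
    (b : EuclideanSpace ℝ (Fin n)) :
    NonconvexOfGrade (fun x => f (A x + b)) (Set.univ) (m + τ - n) := by
  intro x _
  obtain ⟨V, hVdim, hVpos⟩ := hfg (A x + b) (mem_univ _)
  refine ⟨V.comap A.toLinearMap, ?_, fun h hh => ?_⟩
  · have hdim := V.finrank_add_finrank_le_finrank_comap_add A.toLinearMap
    simp only [finrank_euclideanSpace_fin] at hdim
    omega
  · rw [iteratedFDeriv_comp_affine_apply hf A b le_rfl]
    convert hVpos (A h) hh using 2
    ext i
    fin_cases i <;> rfl
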